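/- Let P be an irreducible, reversible, lazy transition matrix on a finite set V with stationary distribution π. Then Σ_{t=0}^∞ E(P^t_{·,w}) ≤ π_w for every w ∈ V, where E denotes the Dirichlet form with respect to P and π. -/

import Mathlib

/-!
Write `‖f‖² = π ⬝ᵥ (f * f)`. Row sums and stationarity turn the Dirichlet form into
`E(f) = ‖f‖² - π ⬝ᵥ (f * P f)`. For a lazy chain `Q = 2P - 1` is again stochastic with
stationary distribution `π`, hence an `L²(π)`-contraction, and expanding `‖Q f‖² ≤ ‖f‖²` gives
`‖P f‖² ≤ π ⬝ᵥ (f * P f)`. So along the columns `f_t = P^t e_w` we get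
`E(f_t) ≤ ‖f_t‖² - ‖f_{t+1}‖²`, which telescopes to at most `‖e_w‖² = π_w`.
-/

open Finset Matrix

section

variable {V : Type*} [Fintype V]

noncomputable def dirichletForm (P : Matrix V V ℝ) (π f : V → ℝ) : ℝ :=
  (1 / 2) * ∑ v, ∑ u, (f v - f u) ^ 2 * (π v * P v u)

lemma dirichletForm_nonneg {P : Matrix V V ℝ} {π : V → ℝ} (hP : ∀ v u, 0 ≤ P v u)
    (hπ : 0 ≤ π) (f : V → ℝ) : 0 ≤ dirichletForm P π f :=
  mul_nonneg (by norm_num) <| sum_nonneg fun v _ => sum_nonneg fun u _ =>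
    mul_nonneg (sq_nonneg _) (mul_nonneg (hπ v) (hP v u))

lemma dirichletForm_eq {P : Matrix V V ℝ} {π : V → ℝ} (hrow : ∀ v, ∑ u, P v u = 1)
    (hstat : π ᵥ* P = π) (f : V → ℝ) :
    dirichletForm P π f = π ⬝ᵥ (f * f) - π ⬝ᵥ (f * P *ᵥ f) := by
  have hexpand : ∀ v, ∑ u, (f v - f u) ^ 2 * (π v * P v u) =
      π v * (f v * f v) - 2 * (π v * (f v * (P *ᵥ f) v)) + π v * (P *ᵥ (f * f)) v := by
    intro v
    have hterm : ∀ u, (f v - f u) ^ 2 * (π v * P v u) = π v * (f v * f v) * P v u -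
        2 * (π v * f v) * (P v u * f u) + π v * (P v u * (f u * f u)) := fun u => by ring
    simp only [hterm, sum_add_distrib, sum_sub_distrib, ← mul_sum, hrow v, mulVec,
      dotProduct, Pi.mul_apply]
    ring
  have hπP : π ⬝ᵥ (P *ᵥ (f * f)) = π ⬝ᵥ (f * f) := by rw [dotProduct_mulVec, hstat]
  simp only [dotProduct, Pi.mul_apply] at hπP ⊢
  rw [dirichletForm, sum_congr rfl fun v _ => hexpand v]
  simp only [sum_add_distrib, sum_sub_distrib, ← mul_sum, hπP]
  ring

lemma mulVec_mul_self_le {R : Matrix V V ℝ} (hR : ∀ v u, 0 ≤ R v u)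
    (hrow : ∀ v, ∑ u, R v u = 1) (f : V → ℝ) : R *ᵥ f * R *ᵥ f ≤ R *ᵥ (f * f) := by
  intro v
  have hCS := sum_sq_le_sum_mul_sum_of_sq_le_mul univ (r := fun u => R v u * f u)
    (fun u _ => hR v u) (fun u _ => mul_nonneg (hR v u) (mul_self_nonneg (f u)))
    (fun u _ => (by ring : (R v u * f u) ^ 2 = R v u * (R v u * (f u * f u))).le)
  simpa [mulVec, dotProduct, hrow v, ← sq] using hCS

lemma dotProduct_mulVec_mul_self_le {R : Matrix V V ℝ} {π : V → ℝ} (hR : ∀ v u, 0 ≤ R v u)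
    (hrow : ∀ v, ∑ u, R v u = 1) (hπ : 0 ≤ π) (hstat : π ᵥ* R = π) (f : V → ℝ) :
    π ⬝ᵥ (R *ᵥ f * R *ᵥ f) ≤ π ⬝ᵥ (f * f) :=
  calc π ⬝ᵥ (R *ᵥ f * R *ᵥ f) ≤ π ⬝ᵥ (R *ᵥ (f * f)) :=
        dotProduct_le_dotProduct_of_nonneg_left (mulVec_mul_self_le hR hrow f) hπ
    _ = π ⬝ᵥ (f * f) := by rw [dotProduct_mulVec, hstat]

lemma dotProduct_mulVec_mul_self_le_of_lazy [DecidableEq V] {P : Matrix V V ℝ} {π : V → ℝ}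
    (hP : ∀ v u, 0 ≤ P v u) (hrow : ∀ v, ∑ u, P v u = 1) (hπ : 0 ≤ π) (hstat : π ᵥ* P = π)
    (hlazy : ∀ v, 1 / 2 ≤ P v v) (f : V → ℝ) :
    π ⬝ᵥ (P *ᵥ f * P *ᵥ f) ≤ π ⬝ᵥ (f * P *ᵥ f) := by
  set Q : Matrix V V ℝ := (2 : ℝ) • P - 1
  have hQ_apply : ∀ v u, Q v u = 2 * P v u - (1 : Matrix V V ℝ) v u := fun _ _ => rfl
  have hQ : ∀ v u, 0 ≤ Q v u := by
    intro v u
    rcases eq_or_ne v u with rfl | h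
    · rw [hQ_apply, one_apply_eq]; linarith [hlazy v]
    · rw [hQ_apply, one_apply_ne h]; linarith [hP v u]
  have hQrow : ∀ v, ∑ u, Q v u = 1 := by
    intro v
    simp only [hQ_apply, sum_sub_distrib, ← mul_sum, hrow v, one_apply, sum_ite_eq, mem_univ,
      if_true]
    norm_num
  have hQstat : π ᵥ* Q = π := by
    rw [vecMul_sub, vecMul_smul, vecMul_one, hstat, two_smul, add_sub_cancel_right]
  have hQf : Q *ᵥ f = (2 : ℝ) • P *ᵥ f - f := by rw [sub_mulVec, smul_mulVec, one_mulVec]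
  have hexpand : π ⬝ᵥ (Q *ᵥ f * Q *ᵥ f) =
      π ⬝ᵥ (f * f) + 4 * (π ⬝ᵥ (P *ᵥ f * P *ᵥ f) - π ⬝ᵥ (f * P *ᵥ f)) := by
    simp only [hQf, dotProduct, Pi.mul_apply, Pi.sub_apply, Pi.smul_apply,
      mul_sum, ← sum_sub_distrib, ← sum_add_distrib]
    exact sum_congr rfl fun v _ => by ring
  linarith [dotProduct_mulVec_mul_self_le hQ hQrow hπ hQstat f]

lemma dirichletForm_le_sub_of_lazy [DecidableEq V] {P : Matrix V V ℝ} {π : V → ℝ}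
    (hP : ∀ v u, 0 ≤ P v u) (hrow : ∀ v, ∑ u, P v u = 1) (hπ : 0 ≤ π) (hstat : π ᵥ* P = π)
    (hlazy : ∀ v, 1 / 2 ≤ P v v) (f : V → ℝ) :
    dirichletForm P π f ≤ π ⬝ᵥ (f * f) - π ⬝ᵥ (P *ᵥ f * P *ᵥ f) := by
  rw [dirichletForm_eq hrow hstat]
  linarith [dotProduct_mulVec_mul_self_le_of_lazy hP hrow hπ hstat hlazy f]

lemma summable_and_tsum_le_of_le_sub {e a : ℕ → ℝ} (he : ∀ t, 0 ≤ e t) (ha : ∀ t, 0 ≤ a t)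
    (hle : ∀ t, e t ≤ a t - a (t + 1)) : Summable e ∧ ∑' t, e t ≤ a 0 := by
  have hpartial : ∀ n, ∑ t ∈ range n, e t ≤ a 0 := fun n =>
    calc ∑ t ∈ range n, e t ≤ ∑ t ∈ range n, (a t - a (t + 1)) := sum_le_sum fun t _ => hle t
      _ = a 0 - a n := sum_range_sub' a n
      _ ≤ a 0 := sub_le_self _ (ha n)
  exact ⟨summable_of_sum_range_le he hpartial, Real.tsum_le_of_sum_range_le he hpartial⟩

end

theorem dirichlet_sum_le_pi_general
    {V : Type*} [Fintype V] [DecidableEq V]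
    (P : Matrix V V ℝ) (π : V → ℝ)
    (hnn : ∀ v u, 0 ≤ P v u) (hrow : ∀ v, ∑ u, P v u = 1)
    (hπnn : ∀ v, 0 ≤ π v)
    (hstat : ∀ u, ∑ v, π v * P v u = π u)
    (hlazy : ∀ v, (1 / 2 : ℝ) ≤ P v v)
    (w : V) :
    Summable (fun t : ℕ =>
      (1 / 2) * ∑ v, ∑ u, ((P ^ t) v w - (P ^ t) u w) ^ 2 * (π v * P v u)) ∧
    (∑' t : ℕ,
      (1 / 2) * ∑ v, ∑ u, ((P ^ t) v w - (P ^ t) u w) ^ 2 * (π v * P v u))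
      ≤ π w := by
  let col : ℕ → V → ℝ := fun t v => (P ^ t) v w
  have hcol : ∀ t, col (t + 1) = P *ᵥ col t := fun t => by
    ext v
    simp only [col, pow_succ', mul_apply, mulVec, dotProduct]
  have hcol_zero : π ⬝ᵥ (col 0 * col 0) = π w := by
    simp [col, dotProduct, one_apply]
  have hsum := summable_and_tsum_le_of_le_sub (e := fun t => dirichletForm P π (col t))
    (a := fun t => π ⬝ᵥ (col t * col t))
    (fun t => dirichletForm_nonneg hnn hπnn _)
    (fun t => dotProduct_nonneg_of_nonneg hπnn fun v => mul_self_nonneg _)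
    (fun t => hcol t ▸ dirichletForm_le_sub_of_lazy hnn hrow hπnn (funext hstat) hlazy _)
  rw [hcol_zero] at hsum
  exact hsum

/-- For an irreducible, reversible, lazy chain, the Dirichlet forms of the
    functions P^t_{·,w} sum to at most π_w:  Σ_{t=0}^∞ E(P^t_{·,w}) ≤ π_w. -/
theorem dirichlet_sum_le_pi
    {V : Type*} [Fintype V] [DecidableEq V]
    (P : Matrix V V ℝ) (π : V → ℝ)
    (hnn : ∀ v u, 0 ≤ P v u) (hrow : ∀ v, ∑ u, P v u = 1)
    (hπnn : ∀ v, 0 ≤ π v) (hπsum : ∑ v, π v = 1)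
    (hstat : ∀ u, ∑ v, π v * P v u = π u)
    (hrev : ∀ v u, π v * P v u = π u * P u v)
    (hirr : ∀ v u, ∃ t : ℕ, 0 < (P ^ t) v u)
    (hlazy : ∀ v, (1 / 2 : ℝ) ≤ P v v)
    (w : V) :
    Summable (fun t : ℕ =>
      (1 / 2) * ∑ v, ∑ u, ((P ^ t) v w - (P ^ t) u w) ^ 2 * (π v * P v u)) ∧
    (∑' t : ℕ,
      (1 / 2) * ∑ v, ∑ u, ((P ^ t) v w - (P ^ t) u w) ^ 2 * (π v * P v u))
      ≤ π w :=
  dirichlet_sum_le_pi_general P π hnn hrow hπnn hstat hlazy w
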